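/- For every integer n ≥ 10 and every integer m with 3n - 11 ≤ m ≤ ⌊(n-1)/2⌋·⌈(n-1)/2⌉ + 2, there exists a non-bipartite K4^--saturated graph on n vertices with exactly m edges. -/

import Mathlib

/-- `G` contains a copy of `K₄⁻` (the diamond graph): four distinct vertices carrying all
six possible edges except the one between the last two. -/
def HasDiamond {V : Type*} (G : SimpleGraph V) : Prop :=
  ∃ a b c d : V, a ≠ b ∧ a ≠ c ∧ a ≠ d ∧ b ≠ c ∧ b ≠ d ∧ c ≠ d ∧
    G.Adj a b ∧ G.Adj a c ∧ G.Adj a d ∧ G.Adj b c ∧ G.Adj b d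

/-- `G` is `K₄⁻`-saturated: it contains no diamond, but adding any non-edge creates one. -/
def DiamondSaturated {V : Type*} (G : SimpleGraph V) : Prop :=
  ¬ HasDiamond G ∧ ∀ u v : V, u ≠ v → ¬ G.Adj u v →
    HasDiamond (G ⊔ SimpleGraph.fromEdgeSet {s(u, v)})

/-!
For `2 ≤ a`, `2 ≤ s ≤ b` take the complete bipartite graph `K_{a,b}` and a path `p₀ - p₁ - p₂`;
join `p₁` to the vertices `j < s` of the `b`-side, join `p₀` and `p₂` to the vertices `j ≥ s`,
and add the edges `0 p₀` and `1 p₂`. This graph has `n = a + b + 3` vertices and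
`m = ab + 2b + 4 - s` edges. Its only triangles are `0 p₀ p₁` and `1 p₁ p₂`, which share no edge,
so it has no diamond, and the first of them makes it non-bipartite. Every non-edge `uv` completes
a diamond: either `u` and `v` have two common neighbours (two vertices on the same side of
`K_{a,b}`, or `j ≥ s` and `p₁`), or `v` lies on one of the two triangles and `u` is adjacent to
another vertex of it. For fixed `a` these graphs realise every `m` in `[(a+1)b + 4, (a+2)b + 2]`,
and as `a` runs from `2` to `⌊(n-1)/2⌋ - 2` these intervals cover the whole range.
-/

open SimpleGraph

section Diamond

variable {V W : Type*} {G : SimpleGraph V} {H : SimpleGraph W}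

theorem HasDiamond.of_adj {a b c d : V} (hab : G.Adj a b) (hac : G.Adj a c) (had : G.Adj a d)
    (hbc : G.Adj b c) (hbd : G.Adj b d) (hcd : c ≠ d) : HasDiamond G :=
  ⟨a, b, c, d, hab.ne, hac.ne, had.ne, hbc.ne, hbd.ne, hcd, hab, hac, had, hbc, hbd⟩

theorem HasDiamond.map (f : G →g H) (hf : Function.Injective f) (h : HasDiamond G) :
    HasDiamond H := by
  obtain ⟨a, b, c, d, -, -, -, -, -, hcd, hab, hac, had, hbc, hbd⟩ := h
  exact .of_adj (f.map_adj hab) (f.map_adj hac) (f.map_adj had) (f.map_adj hbc)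
    (f.map_adj hbd) (hf.ne hcd)

theorem not_hasDiamond_of_commonNeighbors_subsingleton
    (h : ∀ x y, G.Adj x y → (G.commonNeighbors x y).Subsingleton) : ¬ HasDiamond G := by
  rintro ⟨a, b, c, d, -, -, -, -, -, hcd, hab, hac, had, hbc, hbd⟩
  exact hcd (h a b hab ⟨hac, hbc⟩ ⟨had, hbd⟩)

theorem sup_edge_adj_self {u v : V} (huv : u ≠ v) : (G ⊔ edge u v).Adj u v :=
  Or.inr ((edge_adj ..).mpr ⟨Or.inl ⟨rfl, rfl⟩, huv⟩)

theorem hasDiamond_sup_edge_of_two_commonNeighbors {u v c d : V} (huv : u ≠ v)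
    (huc : G.Adj u c) (hvc : G.Adj v c) (hud : G.Adj u d) (hvd : G.Adj v d) (hcd : c ≠ d) :
    HasDiamond (G ⊔ edge u v) :=
  .of_adj (sup_edge_adj_self huv) (Or.inl huc) (Or.inl hud) (Or.inl hvc) (Or.inl hvd) hcd

theorem hasDiamond_sup_edge_of_triangle {u v w x : V} (huv : u ≠ v) (hwu : G.Adj w u)
    (hwv : G.Adj w v) (hwx : G.Adj w x) (hvx : G.Adj v x) (hux : u ≠ x) :
    HasDiamond (G ⊔ edge u v) :=
  .of_adj (Or.inl hwv) (Or.inl hwu) (Or.inl hwx) (sup_edge_adj_self huv).symm (Or.inl hvx) hux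

def SimpleGraph.Hom.supEdge (f : G →g H) (hf : Function.Injective f) (u v : V) :
    G ⊔ edge u v →g H ⊔ edge (f u) (f v) where
  toFun := f
  map_rel' := by
    rintro x y (hxy | hxy)
    · exact Or.inl (f.map_adj hxy)
    · obtain ⟨⟨rfl, rfl⟩ | ⟨rfl, rfl⟩, hne⟩ := (edge_adj ..).mp hxy
      · exact Or.inr ((edge_adj ..).mpr ⟨Or.inl ⟨rfl, rfl⟩, hf.ne hne⟩)
      · exact Or.inr ((edge_adj ..).mpr ⟨Or.inr ⟨rfl, rfl⟩, hf.ne hne⟩)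

theorem DiamondSaturated.of_iso (e : G ≃g H) (h : DiamondSaturated G) : DiamondSaturated H := by
  refine ⟨fun hH => h.1 (hH.map e.symm.toHom e.symm.injective), fun u v huv hnadj => ?_⟩
  have hG := h.2 (e.symm u) (e.symm v) (e.symm.injective.ne huv) (e.symm.map_adj_iff.not.mpr hnadj)
  have hH := hG.map (Hom.supEdge e.toHom e.injective _ _) e.injective
  simp only [RelHom.coeFn_mk, RelIso.coe_fn_toEquiv, RelIso.apply_symm_apply] at hH
  exact hH

end Diamond

def pathLink (s j t : ℕ) : Prop :=
  t = 1 ∧ j < s ∨ t ≠ 1 ∧ s ≤ j ∨ t = 0 ∧ j = 0 ∨ t = 2 ∧ j = 1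

instance (s j t : ℕ) : Decidable (pathLink s j t) := by unfold pathLink; infer_instance

/-- `Sum.inl i` is the `a`-side, `Sum.inr (Sum.inl j)` the `b`-side and `Sum.inr (Sum.inr t)` the
path vertex `pₜ`. -/
def diamondSatGraph (a b s : ℕ) : SimpleGraph (Fin a ⊕ Fin b ⊕ Fin 3) where
  Adj
    | .inl _, .inr (.inl _) | .inr (.inl _), .inl _ => True
    | .inr (.inl j), .inr (.inr t) | .inr (.inr t), .inr (.inl j) => pathLink s j t
    | .inr (.inr t), .inr (.inr t') => (pathGraph 3).Adj t t'
    | _, _ => False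
  symm := ⟨by rintro (i | j | t) (i' | j' | t') h <;> simp_all [(pathGraph 3).adj_comm]⟩
  loopless := ⟨by rintro (i | j | t) h <;> simp_all⟩

instance {n : ℕ} : DecidableRel (pathGraph n).Adj := fun _ _ =>
  decidable_of_iff _ pathGraph_adj.symm

namespace diamondSatGraph

variable {a b s : ℕ}

@[simp] lemma adj_inl_inl (i i' : Fin a) : ¬ (diamondSatGraph a b s).Adj (.inl i) (.inl i') := id
@[simp] lemma adj_inl_inr_inl (i : Fin a) (j : Fin b) :
    (diamondSatGraph a b s).Adj (.inl i) (.inr (.inl j)) := trivial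
@[simp] lemma adj_inl_inr_inr (i : Fin a) (t : Fin 3) :
    ¬ (diamondSatGraph a b s).Adj (.inl i) (.inr (.inr t)) := id
@[simp] lemma adj_inr_inl_inl (j : Fin b) (i : Fin a) :
    (diamondSatGraph a b s).Adj (.inr (.inl j)) (.inl i) := trivial
@[simp] lemma adj_inr_inl_inr_inl (j j' : Fin b) :
    ¬ (diamondSatGraph a b s).Adj (.inr (.inl j)) (.inr (.inl j')) := id
@[simp] lemma adj_inr_inl_inr_inr (j : Fin b) (t : Fin 3) :
    (diamondSatGraph a b s).Adj (.inr (.inl j)) (.inr (.inr t)) ↔ pathLink s j t := Iff.rfl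
@[simp] lemma adj_inr_inr_inl (t : Fin 3) (i : Fin a) :
    ¬ (diamondSatGraph a b s).Adj (.inr (.inr t)) (.inl i) := id
@[simp] lemma adj_inr_inr_inr_inl (t : Fin 3) (j : Fin b) :
    (diamondSatGraph a b s).Adj (.inr (.inr t)) (.inr (.inl j)) ↔ pathLink s j t := Iff.rfl
@[simp] lemma adj_inr_inr_inr_inr (t t' : Fin 3) :
    (diamondSatGraph a b s).Adj (.inr (.inr t)) (.inr (.inr t')) ↔ (pathGraph 3).Adj t t' := Iff.rfl

theorem commonNeighbors_subsingleton (hs : 2 ≤ s) {x y : Fin a ⊕ Fin b ⊕ Fin 3}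
    (hxy : (diamondSatGraph a b s).Adj x y) : ((diamondSatGraph a b s).commonNeighbors x y).Subsingleton := by
  intro c hc d hd
  obtain ⟨hxc, hyc⟩ := (mem_commonNeighbors _).mp hc
  obtain ⟨hxd, hyd⟩ := (mem_commonNeighbors _).mp hd
  clear hc hd
  rcases x with i | j | t <;> rcases y with i' | j' | t' <;>
    rcases c with ci | cj | ct <;> rcases d with di | dj | dt <;>
    simp only [adj_inl_inl, adj_inl_inr_inl, adj_inl_inr_inr, adj_inr_inl_inl,
      adj_inr_inl_inr_inl, adj_inr_inl_inr_inr, adj_inr_inr_inl, adj_inr_inr_inr_inl,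
      adj_inr_inr_inr_inr, pathLink, pathGraph_adj,
      Sum.inl.injEq, Sum.inr.injEq, reduceCtorEq, Fin.ext_iff] at * <;> omega

theorem not_colorable_two (hs : 2 ≤ s) (hsb : s ≤ b) : ¬ (diamondSatGraph a b s).Colorable 2 := fun h =>
  h.cliqueFree (by norm_num) {.inr (.inl ⟨0, by omega⟩), .inr (.inr 0), .inr (.inr 1)}
    (is3Clique_triple_iff.mpr (by simp [pathLink, pathGraph_adj]; omega))

theorem hasDiamond_sup_inl_inl (hb : 2 ≤ b) {i i' : Fin a} (h : i ≠ i') :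
    HasDiamond (diamondSatGraph a b s ⊔ edge (.inl i) (.inl i')) :=
  hasDiamond_sup_edge_of_two_commonNeighbors (c := .inr (.inl ⟨0, by omega⟩))
    (d := .inr (.inl ⟨1, by omega⟩)) (by simpa) (by simp) (by simp) (by simp) (by simp) (by simp)

theorem hasDiamond_sup_inr_inl_inr_inl (ha : 2 ≤ a) {j j' : Fin b} (h : j ≠ j') :
    HasDiamond (diamondSatGraph a b s ⊔ edge (.inr (.inl j)) (.inr (.inl j'))) :=
  hasDiamond_sup_edge_of_two_commonNeighbors (c := .inl ⟨0, by omega⟩)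
    (d := .inl ⟨1, by omega⟩) (by simpa) (by simp) (by simp) (by simp) (by simp) (by simp)

theorem hasDiamond_sup_inl_inr_inr (hs : 2 ≤ s) (hsb : s ≤ b) (i : Fin a) (t : Fin 3) :
    HasDiamond (diamondSatGraph a b s ⊔ edge (.inl i) (.inr (.inr t))) := by
  have hb : 2 ≤ b := hs.trans hsb
  fin_cases t
  · exact hasDiamond_sup_edge_of_triangle (w := .inr (.inl ⟨0, by omega⟩)) (x := .inr (.inr 1))
      (by simp) (by simp) (by simp [pathLink]) (by simp [pathLink]; omega) (by simp [pathGraph_adj]) (by simp)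
  · exact hasDiamond_sup_edge_of_triangle (w := .inr (.inl ⟨0, by omega⟩)) (x := .inr (.inr 0))
      (by simp) (by simp) (by simp [pathLink]; omega) (by simp [pathLink]) (by simp [pathGraph_adj]) (by simp)
  · exact hasDiamond_sup_edge_of_triangle (w := .inr (.inl ⟨1, by omega⟩)) (x := .inr (.inr 1))
      (by simp) (by simp) (by simp [pathLink]) (by simp [pathLink]; omega) (by simp [pathGraph_adj]) (by simp)

theorem hasDiamond_sup_inr_inl_inr_inr (hs : 2 ≤ s) (hsb : s ≤ b) {j : Fin b} {t : Fin 3}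
    (h : ¬ pathLink s j t) :
    HasDiamond (diamondSatGraph a b s ⊔ edge (.inr (.inl j)) (.inr (.inr t))) := by
  have hb : 2 ≤ b := hs.trans hsb
  fin_cases t <;> simp [pathLink] at h
  · exact hasDiamond_sup_edge_of_triangle (w := .inr (.inr 1)) (x := .inr (.inl ⟨0, by omega⟩))
      (by simp) (by simp [pathLink]; omega) (by simp [pathGraph_adj]) (by simp [pathLink]; omega)
      (by simp [pathLink]) (by simp [Fin.ext_iff]; omega)
  · exact hasDiamond_sup_edge_of_two_commonNeighbors (c := .inr (.inr 0)) (d := .inr (.inr 2))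
      (by simp) (by simp [pathLink]; omega) (by simp [pathGraph_adj]) (by simp [pathLink]; omega)
      (by simp [pathGraph_adj]) (by simp)
  · exact hasDiamond_sup_edge_of_triangle (w := .inr (.inr 1)) (x := .inr (.inl ⟨1, by omega⟩))
      (by simp) (by simp [pathLink]; omega) (by simp [pathGraph_adj]) (by simp [pathLink]; omega)
      (by simp [pathLink]) (by simp [Fin.ext_iff]; omega)

theorem hasDiamond_sup_inr_inr_inr_inr (hs : 2 ≤ s) (hsb : s ≤ b) {t t' : Fin 3} (h : t ≠ t')
    (hnadj : ¬ (pathGraph 3).Adj t t') :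
    HasDiamond (diamondSatGraph a b s ⊔ edge (.inr (.inr t)) (.inr (.inr t'))) := by
  have hb : 2 ≤ b := hs.trans hsb
  fin_cases t <;> fin_cases t' <;> simp [pathGraph_adj] at h hnadj
  · exact hasDiamond_sup_edge_of_triangle (w := .inr (.inr 1)) (x := .inr (.inl ⟨1, by omega⟩))
      (by simp) (by simp [pathGraph_adj]) (by simp [pathGraph_adj]) (by simp [pathLink]; omega)
      (by simp [pathLink]) (by simp)
  · exact hasDiamond_sup_edge_of_triangle (w := .inr (.inr 1)) (x := .inr (.inl ⟨0, by omega⟩))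
      (by simp) (by simp [pathGraph_adj]) (by simp [pathGraph_adj]) (by simp [pathLink]; omega)
      (by simp [pathLink]) (by simp)

theorem hasDiamond_sup_of_not_adj (ha : 2 ≤ a) (hs : 2 ≤ s) (hsb : s ≤ b)
    {u v : Fin a ⊕ Fin b ⊕ Fin 3} (huv : u ≠ v) (hnadj : ¬ (diamondSatGraph a b s).Adj u v) :
    HasDiamond (diamondSatGraph a b s ⊔ edge u v) := by
  rcases u with i | j | t <;> rcases v with i' | j' | t'
  · exact hasDiamond_sup_inl_inl (hs.trans hsb) (by simpa using huv)
  · exact absurd (by simp) hnadj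
  · exact hasDiamond_sup_inl_inr_inr hs hsb i t'
  · exact absurd (by simp) hnadj
  · exact hasDiamond_sup_inr_inl_inr_inl ha (by simpa using huv)
  · exact hasDiamond_sup_inr_inl_inr_inr hs hsb (by simpa using hnadj)
  · rw [edge_comm]; exact hasDiamond_sup_inl_inr_inr hs hsb i' t
  · rw [edge_comm]; exact hasDiamond_sup_inr_inl_inr_inr hs hsb (by simpa using hnadj)
  · exact hasDiamond_sup_inr_inr_inr_inr hs hsb (by simpa using huv) (by simpa using hnadj)

theorem diamondSaturated (ha : 2 ≤ a) (hs : 2 ≤ s) (hsb : s ≤ b) :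
    DiamondSaturated (diamondSatGraph a b s) :=
  ⟨not_hasDiamond_of_commonNeighbors_subsingleton fun _ _ => commonNeighbors_subsingleton hs,
    fun _ _ => hasDiamond_sup_of_not_adj ha hs hsb⟩

instance : DecidableRel (diamondSatGraph a b s).Adj := by
  rintro (i | j | t) (i' | j' | t') <;> simp only [diamondSatGraph] <;> infer_instance

theorem sum_link_add (hs : 2 ≤ s) (hsb : s ≤ b) :
    ∑ j : Fin b, ∑ t : Fin 3, (if pathLink s j t then 1 else 0) + s = 2 * b + 2 := by
  have hj (j : ℕ) :
      ∑ t : Fin 3, (if pathLink s j t then 1 else 0) + (if j ∈ Finset.Ico 2 s then 1 else 0) = 2 := by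
    simp only [Fin.sum_univ_three, pathLink, Fin.isValue, Fin.val_zero, Fin.val_one, Fin.val_two,
      Finset.mem_Ico]
    split_ifs <;> simp_all <;> omega
  have hmid : ∑ j : Fin b, (if (j : ℕ) ∈ Finset.Ico 2 s then 1 else 0) = s - 2 := by
    rw [Fin.sum_univ_eq_sum_range (fun j => if j ∈ Finset.Ico 2 s then 1 else 0), Finset.sum_boole,
      Finset.filter_mem_eq_inter, Finset.inter_eq_right.mpr, Nat.cast_id, Nat.card_Ico]
    exact fun j hj => Finset.mem_range.mpr (by simp at hj; omega)
  have hsum : ∑ j : Fin b, (∑ t : Fin 3, (if pathLink s j t then 1 else 0) +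
      (if (j : ℕ) ∈ Finset.Ico 2 s then 1 else 0)) = ∑ j : Fin b, 2 :=
    Finset.sum_congr rfl fun j _ => hj j
  rw [Finset.sum_add_distrib, hmid, Finset.sum_const, Finset.card_univ, Fintype.card_fin,
    smul_eq_mul] at hsum
  omega

theorem card_edgeFinset_add (hs : 2 ≤ s) (hsb : s ≤ b) :
    (diamondSatGraph a b s).edgeFinset.card + s = a * b + 2 * b + 4 := by
  have hdeg := sum_degrees_eq_twice_card_edges (diamondSatGraph a b s)
  simp only [← card_neighborFinset_eq_degree, neighborFinset_eq_filter, Finset.card_filter,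
    Fintype.sum_sum_type, adj_inl_inl, adj_inl_inr_inl, adj_inl_inr_inr, adj_inr_inl_inl,
    adj_inr_inl_inr_inl, adj_inr_inl_inr_inr, adj_inr_inr_inl, adj_inr_inr_inr_inl,
    adj_inr_inr_inr_inr, if_true, if_false, Finset.sum_const_zero, Finset.sum_const,
    Finset.card_univ, Fintype.card_fin, smul_eq_mul, zero_add, add_zero,
    Finset.sum_add_distrib] at hdeg
  have hpath : ∑ t : Fin 3, ∑ t' : Fin 3, (if (pathGraph 3).Adj t t' then 1 else 0) = 4 := by
    decide
  have hcomm : ∑ t : Fin 3, ∑ j : Fin b, (if pathLink s j t then 1 else 0) =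
      ∑ j : Fin b, ∑ t : Fin 3, (if pathLink s j t then 1 else 0) := Finset.sum_comm
  rw [hpath] at hdeg
  linarith [sum_link_add hs hsb]

end diamondSatGraph

theorem exists_diamondSaturated_fin {a b s : ℕ} (ha : 2 ≤ a) (hs : 2 ≤ s) (hsb : s ≤ b) :
    ∃ G : SimpleGraph (Fin (a + b + 3)), DiamondSaturated G ∧ ¬ G.Colorable 2 ∧
      G.edgeSet.ncard + s = a * b + 2 * b + 4 := by
  have hcard : Fintype.card (Fin a ⊕ Fin b ⊕ Fin 3) = a + b + 3 := by simp; omega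
  let e := (diamondSatGraph a b s).overFinIso hcard
  refine ⟨_, (diamondSatGraph.diamondSaturated ha hs hsb).of_iso e,
    fun h => diamondSatGraph.not_colorable_two hs hsb (.of_hom e.toHom h), ?_⟩
  rw [← Nat.card_coe_set_eq, ← Nat.card_congr e.mapEdgeSet, Nat.card_coe_set_eq,
    ← coe_edgeFinset, Set.ncard_coe_finset]
  exact diamondSatGraph.card_edgeFinset_add hs hsb

theorem exists_params_of_le_mul {n m : ℕ} (hm : 3 * n ≤ m + 11) {a : ℕ} (ha : 2 ≤ a) :
    ∀ b, a + b + 3 = n → a + 2 ≤ b → m ≤ (a + 2) * b + 2 →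
      ∃ a b s, 2 ≤ a ∧ 2 ≤ s ∧ s ≤ b ∧ a + b + 3 = n ∧ m + s = a * b + 2 * b + 4 := by
  induction a, ha using Nat.le_induction with
  | base =>
    intro b hn _ hmb
    exact ⟨2, b, 4 * b + 4 - m, le_rfl, by omega, by omega, hn, by omega⟩
  | succ a ha ih =>
    intro b hn hab hmb
    by_cases hprev : m ≤ (a + 2) * (b + 1) + 2
    · exact ih (b + 1) (by omega) (by omega) hprev
    · have h1 : (a + 1 + 2) * b = (a + 2) * b + b := by ring
      have h2 : (a + 2) * (b + 1) = (a + 2) * b + a + 2 := by ring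
      have h3 : (a + 1) * b + 2 * b = (a + 2) * b + b := by ring
      exact ⟨a + 1, b, (a + 1 + 2) * b + 4 - m, by omega, by omega, by omega, hn, by omega⟩

theorem exists_params {n m : ℕ} (hn : 10 ≤ n) (hm₁ : 3 * n - 11 ≤ m)
    (hm₂ : m ≤ (n - 1) / 2 * (n / 2) + 2) :
    ∃ a b s, 2 ≤ a ∧ 2 ≤ s ∧ s ≤ b ∧ a + b + 3 = n ∧ m + s = a * b + 2 * b + 4 := by
  have hc : (n - 1) / 2 = (n - 1) / 2 - 2 + 2 := by omega
  rw [hc] at hm₂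
  exact exists_params_of_le_mul (by omega) (a := (n - 1) / 2 - 2) (by omega) (n / 2) (by omega)
    (by omega) hm₂

theorem stmt_11 (n m : ℕ) (hn : 10 ≤ n) (hm₁ : 3 * n - 11 ≤ m)
    (hm₂ : m ≤ ((n - 1) / 2) * (n / 2) + 2) :
    ∃ G : SimpleGraph (Fin n), DiamondSaturated G ∧ ¬ G.Colorable 2 ∧
      G.edgeSet.ncard = m := by
  obtain ⟨a, b, s, ha, hs, hsb, rfl, hm⟩ := exists_params hn hm₁ hm₂
  obtain ⟨G, hG, hcol, hcard⟩ := exists_diamondSaturated_fin ha hs hsb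
  exact ⟨G, hG, hcol, by omega⟩
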